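/- arXiv:2306.01513 — 4 statements merged into one kernel-verified Lean document; each statement's English description precedes it below -/
import Mathlib

section
/- Let θ ∈ [0, π] and let (G, Ĝ) be a bivariate Gaussian random vector with standard normal marginals and covariance E[G·Ĝ] = cos θ. Then E[φ(G)·φ(Ĝ)] = (sin θ + (π − θ)·cos θ) / (2π), where φ(x) = max(x, 0) is the ReLU function. -/
open MeasureTheory ProbabilityTheory Real

/-- The ReLU function `φ(x) = max(x, 0)`. -/
noncomputable def relu (x : ℝ) : ℝ := max x 0

/-- The joint law of a bivariate Gaussian vector `(G, Ĝ)` with standard normal marginals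
and covariance `E[G·Ĝ] = cos θ`, realized as `G = Z₁`, `Ĝ = cos θ · Z₁ + sin θ · Z₂` for
independent standard normals `Z₁, Z₂`. -/
noncomputable def bivGaussian (θ : ℝ) : Measure (ℝ × ℝ) :=
  Measure.map (fun z : ℝ × ℝ => (z.1, Real.cos θ * z.1 + Real.sin θ * z.2))
    ((gaussianReal 0 1).prod (gaussianReal 0 1))

/-! The integrand `relu z₁ * relu (cos θ * z₁ + sin θ * z₂)` is positively homogeneous of
degree 2, so in polar coordinates the standard Gaussian integral splits into the radial moment
`∫₀^∞ r³ e^{-r²/2} dr = 2` times `(2π)⁻¹` times an angular integral. The angular integrand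
`relu (cos t) * relu (cos (t - θ))` lives on the arc `(θ - π/2, π/2)`, where it equals
`cos t * cos (t - θ) = (cos (2t - θ) + cos θ) / 2`. -/

open Set

lemma relu_of_nonpos {x : ℝ} (h : x ≤ 0) : relu x = 0 := max_eq_right h

lemma relu_of_nonneg {x : ℝ} (h : 0 ≤ x) : relu x = x := max_eq_left h

lemma relu_mul_of_nonneg {r : ℝ} (hr : 0 ≤ r) (x : ℝ) : relu (r * x) = r * relu x := by
  rw [relu, relu, mul_max_of_nonneg _ _ hr, mul_zero]

@[fun_prop]
lemma continuous_relu : Continuous relu := continuous_id.max continuous_const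

lemma integral_Ioi_pow_three_mul_exp_neg_sq_div_two :
    ∫ r in Ioi (0 : ℝ), r ^ 3 * exp (-(r ^ 2 / 2)) = 2 := by
  have h := integral_rpow_mul_exp_neg_mul_rpow (p := 2) (q := 3) (b := 1 / 2)
    (by norm_num) (by norm_num) (by norm_num)
  norm_num at h
  refine (setIntegral_congr_fun measurableSet_Ioi fun r _ => ?_).trans h
  ring_nf

lemma gaussianPDFReal_zero_one_mul (x y : ℝ) :
    gaussianPDFReal 0 1 x * gaussianPDFReal 0 1 y = (2 * π)⁻¹ * exp (-((x ^ 2 + y ^ 2) / 2)) := by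
  simp only [gaussianPDFReal, NNReal.coe_one, mul_one, sub_zero]
  rw [mul_mul_mul_comm, ← exp_add, ← mul_inv, Real.mul_self_sqrt (by positivity)]
  ring_nf

lemma integral_gaussianReal_prod {E : Type*} [NormedAddCommGroup E] [NormedSpace ℝ E]
    (μ₁ μ₂ : ℝ) {v₁ v₂ : NNReal} (hv₁ : v₁ ≠ 0) (hv₂ : v₂ ≠ 0) (f : ℝ × ℝ → E) :
    ∫ z, f z ∂(gaussianReal μ₁ v₁).prod (gaussianReal μ₂ v₂)
      = ∫ z, (gaussianPDFReal μ₁ v₁ z.1 * gaussianPDFReal μ₂ v₂ z.2) • f z := by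
  rw [gaussianReal_of_var_ne_zero _ hv₁, gaussianReal_of_var_ne_zero _ hv₂,
    prod_withDensity (measurable_gaussianPDF _ _) (measurable_gaussianPDF _ _),
    ← Measure.volume_eq_prod, integral_withDensity_eq_integral_toReal_smul (by fun_prop)
    (ae_of_all _ fun z => ENNReal.mul_lt_top gaussianPDF_lt_top gaussianPDF_lt_top)]
  simp only [ENNReal.toReal_mul, toReal_gaussianPDF]

lemma integral_stdGaussian_prod_of_homogeneous {E : Type*} [NormedAddCommGroup E]
    [NormedSpace ℝ E] {f : ℝ × ℝ → E} (hf : ∀ r : ℝ, 0 < r → ∀ z, f (r • z) = r ^ 2 • f z) :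
    ∫ z, f z ∂(gaussianReal 0 1).prod (gaussianReal 0 1)
      = π⁻¹ • ∫ t in Ioo (-π) π, f (cos t, sin t) := by
  have hpolar : ∀ p ∈ Ioi (0 : ℝ) ×ˢ Ioo (-π) π,
      p.1 • (gaussianPDFReal 0 1 (polarCoord.symm p).1 * gaussianPDFReal 0 1 (polarCoord.symm p).2)
          • f (polarCoord.symm p)
        = (p.1 ^ 3 * exp (-(p.1 ^ 2 / 2))) • ((2 * π)⁻¹ • f (cos p.2, sin p.2)) := by
    rintro ⟨r, t⟩ ⟨hr, -⟩
    have hsymm : polarCoord.symm (r, t) = r • (cos t, sin t) := by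
      simp [polarCoord_symm_apply]
    rw [hsymm, hf r hr, Prod.smul_fst, Prod.smul_snd, smul_eq_mul, smul_eq_mul,
      gaussianPDFReal_zero_one_mul, smul_smul, smul_smul, smul_smul]
    congr 1
    have := sin_sq_add_cos_sq t
    rw [show (r * cos t) ^ 2 + (r * sin t) ^ 2 = r ^ 2 by linear_combination r ^ 2 * this]
    ring
  calc ∫ z, f z ∂(gaussianReal 0 1).prod (gaussianReal 0 1)
      = ∫ z, (gaussianPDFReal 0 1 z.1 * gaussianPDFReal 0 1 z.2) • f z :=
        integral_gaussianReal_prod 0 0 one_ne_zero one_ne_zero f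
    _ = ∫ p in Ioi (0 : ℝ) ×ˢ Ioo (-π) π,
          (p.1 ^ 3 * exp (-(p.1 ^ 2 / 2))) • ((2 * π)⁻¹ • f (cos p.2, sin p.2)) := by
        rw [← integral_comp_polarCoord_symm, polarCoord_target]
        exact setIntegral_congr_fun (measurableSet_Ioi.prod measurableSet_Ioo) hpolar
    _ = (∫ r in Ioi (0 : ℝ), r ^ 3 * exp (-(r ^ 2 / 2)))
          • ∫ t in Ioo (-π) π, (2 * π)⁻¹ • f (cos t, sin t) := by
        rw [Measure.volume_eq_prod, ← Measure.prod_restrict]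
        exact integral_prod_smul (fun r : ℝ => r ^ 3 * exp (-(r ^ 2 / 2)))
          (fun t => (2 * π)⁻¹ • f (cos t, sin t))
    _ = π⁻¹ • ∫ t in Ioo (-π) π, f (cos t, sin t) := by
        rw [integral_Ioi_pow_three_mul_exp_neg_sq_div_two, integral_smul, smul_smul]
        congr 1
        field_simp

lemma integral_cos_mul_cos_sub (θ : ℝ) :
    ∫ t in (θ - π / 2)..(π / 2), cos t * cos (t - θ) = (sin θ + (π - θ) * cos θ) / 2 := by
  have hprod : ∀ t, cos t * cos (t - θ) = (cos (2 * t - θ) + cos θ) / 2 := fun t => by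
    rw [cos_sub, cos_sub, cos_two_mul, sin_two_mul]
    ring
  simp only [hprod, intervalIntegral.integral_div]
  congr 1
  rw [intervalIntegral.integral_add
      ((by fun_prop : Continuous fun t => cos (2 * t - θ)).intervalIntegrable _ _)
      intervalIntegrable_const,
    intervalIntegral.integral_comp_mul_sub cos two_ne_zero, integral_cos,
    intervalIntegral.integral_const, show 2 * (π / 2) - θ = π - θ by ring,
    show 2 * (θ - π / 2) - θ = θ - π by ring, sin_pi_sub, sin_sub_pi, smul_eq_mul, smul_eq_mul]
  ring

lemma relu_cos_mul_relu_cos_sub_eq_indicator {θ t : ℝ} (hθ₀ : 0 ≤ θ) (hθπ : θ ≤ π)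
    (ht : t ∈ Ioo (-π) π) :
    relu (cos t) * relu (cos (t - θ))
      = (Ioo (θ - π / 2) (π / 2)).indicator (fun t => cos t * cos (t - θ)) t := by
  by_cases hmem : t ∈ Ioo (θ - π / 2) (π / 2)
  · rw [indicator_of_mem hmem,
      relu_of_nonneg (cos_nonneg_of_mem_Icc ⟨by linarith [hmem.1], hmem.2.le⟩),
      relu_of_nonneg (cos_nonneg_of_mem_Icc ⟨by linarith [hmem.1], by linarith [hmem.2]⟩)]
  rw [indicator_of_notMem hmem]
  obtain ⟨ht₁, ht₂⟩ := ht
  rcases le_or_gt (π / 2) t with ht₃ | ht₃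
  · rw [relu_of_nonpos (cos_nonpos_of_pi_div_two_le_of_le ht₃ (by linarith)), zero_mul]
  rcases le_or_gt t (-(π / 2)) with ht₄ | ht₄
  · rw [relu_of_nonpos (by
      rw [← cos_neg]; exact cos_nonpos_of_pi_div_two_le_of_le (by linarith) (by linarith)),
      zero_mul]
  have ht₅ : t ≤ θ - π / 2 := not_lt.1 fun h => hmem ⟨h, ht₃⟩
  rw [relu_of_nonpos (x := cos (t - θ)) (by
      rw [← cos_neg]; exact cos_nonpos_of_pi_div_two_le_of_le (by linarith) (by linarith)),
    mul_zero]

lemma integral_relu_cos_mul_relu_cos_sub {θ : ℝ} (hθ₀ : 0 ≤ θ) (hθπ : θ ≤ π) :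
    ∫ t in Ioo (-π) π, relu (cos t) * relu (cos (t - θ)) = (sin θ + (π - θ) * cos θ) / 2 := by
  rw [setIntegral_congr_fun measurableSet_Ioo
      fun t ht => relu_cos_mul_relu_cos_sub_eq_indicator hθ₀ hθπ ht,
    setIntegral_indicator measurableSet_Ioo,
    inter_eq_self_of_subset_right (Ioo_subset_Ioo (by linarith [pi_pos]) (by linarith [pi_pos])),
    ← integral_Ioc_eq_integral_Ioo, ← intervalIntegral.integral_of_le (by linarith),
    integral_cos_mul_cos_sub]

instance isProbabilityMeasure_bivGaussian (θ : ℝ) : IsProbabilityMeasure (bivGaussian θ) :=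
  Measure.isProbabilityMeasure_map (by fun_prop)

lemma integral_bivGaussian {E : Type*} [NormedAddCommGroup E] [NormedSpace ℝ E] (θ : ℝ)
    {f : ℝ × ℝ → E} (hf : AEStronglyMeasurable f (bivGaussian θ)) :
    ∫ z, f z ∂bivGaussian θ
      = ∫ z, f (z.1, cos θ * z.1 + sin θ * z.2) ∂(gaussianReal 0 1).prod (gaussianReal 0 1) :=
  integral_map (by fun_prop) hf

theorem relu_corr_moment_general {Ω : Type*} [MeasureSpace Ω]
    (θ : ℝ) (hθ : θ ∈ Set.Icc 0 π) (G Ghat : Ω → ℝ)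
    (hlaw : Measure.map (fun ω => (G ω, Ghat ω)) ℙ = bivGaussian θ) :
    ∫ ω, relu (G ω) * relu (Ghat ω) ∂ℙ = (Real.sin θ + (π - θ) * Real.cos θ) / (2 * π) := by
  have hF : Continuous fun z : ℝ × ℝ => relu z.1 * relu z.2 := by fun_prop
  -- `Measure.map` of a non-AE-measurable function is `0`, which `bivGaussian θ` is not.
  have hpair : AEMeasurable (fun ω => (G ω, Ghat ω)) ℙ :=
    .of_map_ne_zero (hlaw ▸ IsProbabilityMeasure.ne_zero _)
  have hhom : ∀ r : ℝ, 0 < r → ∀ z : ℝ × ℝ,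
      relu (r • z).1 * relu (cos θ * (r • z).1 + sin θ * (r • z).2)
        = r ^ 2 • (relu z.1 * relu (cos θ * z.1 + sin θ * z.2)) := fun r hr z => by
    simp only [Prod.smul_fst, Prod.smul_snd, smul_eq_mul]
    rw [show cos θ * (r * z.1) + sin θ * (r * z.2) = r * (cos θ * z.1 + sin θ * z.2) by ring,
      relu_mul_of_nonneg hr.le, relu_mul_of_nonneg hr.le]
    ring
  calc ∫ ω, relu (G ω) * relu (Ghat ω) ∂ℙ
      = ∫ z, relu z.1 * relu z.2 ∂bivGaussian θ := by
        rw [← hlaw, integral_map hpair hF.aestronglyMeasurable]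
    _ = π⁻¹ * ∫ t in Ioo (-π) π, relu (cos t) * relu (cos (t - θ)) := by
        rw [integral_bivGaussian θ hF.aestronglyMeasurable,
          integral_stdGaussian_prod_of_homogeneous hhom, smul_eq_mul]
        simp only [cos_sub]
        ring_nf
    _ = (sin θ + (π - θ) * cos θ) / (2 * π) := by
        rw [integral_relu_cos_mul_relu_cos_sub hθ.1 hθ.2]
        field_simp

/-- If `θ ∈ [0, π]` and `(G, Ĝ)` is a bivariate Gaussian random vector with standard normal
marginals and covariance `E[G·Ĝ] = cos θ`, then
`E[φ(G)·φ(Ĝ)] = (sin θ + (π − θ)·cos θ) / (2π)`. -/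
theorem relu_corr_moment {Ω : Type*} [MeasureSpace Ω] [IsProbabilityMeasure (ℙ : Measure Ω)]
    (θ : ℝ) (hθ : θ ∈ Set.Icc 0 π) (G Ghat : Ω → ℝ)
    (hlaw : Measure.map (fun ω => (G ω, Ghat ω)) ℙ = bivGaussian θ) :
    ∫ ω, relu (G ω) * relu (Ghat ω) ∂ℙ = (Real.sin θ + (π - θ) * Real.cos θ) / (2 * π) :=
  relu_corr_moment_general θ hθ G Ghat hlaw
end

section
/- For every θ ∈ (0, π), π·cos θ < sin θ + (π − θ)·cos θ < π. Consequently, the infinite width angle map f : [0, π] → [0, π] defined by f(θ) = arccos((sin θ + (π − θ)·cos θ)/π) satisfies 0 < f(θ) < θ for every θ ∈ (0, π), and f(0) = 0. -/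
/-!
Writing `g(θ) = sin θ + (π − θ) cos θ`, the lower bound `π cos θ < g(θ)` is `θ cos θ < sin θ`,
which is `θ < tan θ` where `cos θ > 0` and trivial where `cos θ ≤ 0`; the upper bound
`g(θ) < π` combines `sin θ < θ` with `cos θ < 1`. Hence `cos θ < g(θ)/π < 1`, and applying the
strictly decreasing `arccos` gives `0 < f(θ) < arccos (cos θ) = θ`.
-/

open Real

/-- The infinite width angle update map `f(θ) = arccos((sin θ + (π − θ)·cos θ)/π)`,
mapping `[0, π]` to `[0, π]`. -/
noncomputable def infWidthMap (θ : ℝ) : ℝ :=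
  Real.arccos ((Real.sin θ + (π - θ) * Real.cos θ) / π)

section

variable {θ : ℝ}

lemma mul_cos_lt_sin (h0 : 0 < θ) (hπ : θ < π) : θ * cos θ < sin θ := by
  rcases le_or_gt (cos θ) 0 with hcos | hcos
  · nlinarith [sin_pos_of_pos_of_lt_pi h0 hπ]
  · have hθ : θ < π / 2 := by
      by_contra! h
      linarith [cos_nonpos_of_pi_div_two_le_of_le h (by linarith)]
    calc θ * cos θ < tan θ * cos θ := by gcongr; exact lt_tan h0 hθ
      _ = sin θ := by rw [tan_eq_sin_div_cos, div_mul_cancel₀ _ hcos.ne']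

lemma pi_mul_cos_lt_sin_add_mul_cos (h0 : 0 < θ) (hπ : θ < π) :
    π * cos θ < sin θ + (π - θ) * cos θ := by
  linarith [mul_cos_lt_sin h0 hπ]

lemma sin_add_mul_cos_lt_pi (h0 : 0 < θ) (hπ : θ < π) :
    sin θ + (π - θ) * cos θ < π := by
  have hcos : cos θ < 1 := by simpa using cos_lt_cos_of_nonneg_of_le_pi le_rfl hπ.le h0
  nlinarith [sin_lt h0]

lemma infWidthMap_pos (h0 : 0 < θ) (hπ : θ < π) : 0 < infWidthMap θ :=
  arccos_pos.mpr <| (div_lt_one pi_pos).mpr <| sin_add_mul_cos_lt_pi h0 hπ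

lemma infWidthMap_lt_self (h0 : 0 < θ) (hπ : θ < π) : infWidthMap θ < θ := by
  have hlt : cos θ < (sin θ + (π - θ) * cos θ) / π := by
    rw [lt_div_iff₀ pi_pos, mul_comm]
    exact pi_mul_cos_lt_sin_add_mul_cos h0 hπ
  have hle : (sin θ + (π - θ) * cos θ) / π ≤ 1 :=
    (div_le_one pi_pos).mpr (sin_add_mul_cos_lt_pi h0 hπ).le
  calc infWidthMap θ < arccos (cos θ) := arccos_lt_arccos (neg_one_le_cos θ) hlt hle
    _ = θ := arccos_cos h0.le hπ.le

end

lemma infWidthMap_zero : infWidthMap 0 = 0 := by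
  simp [infWidthMap, pi_ne_zero]

/-- For every `θ ∈ (0, π)`, `π·cos θ < sin θ + (π − θ)·cos θ < π`.  Consequently, the
infinite width angle map `f(θ) = arccos((sin θ + (π − θ)·cos θ)/π)` satisfies
`0 < f(θ) < θ` for every `θ ∈ (0, π)`, and `f(0) = 0`. -/
theorem infWidthMap_strict_decrease :
    (∀ θ ∈ Set.Ioo (0 : ℝ) π,
      π * Real.cos θ < Real.sin θ + (π - θ) * Real.cos θ ∧
      Real.sin θ + (π - θ) * Real.cos θ < π) ∧
    (∀ θ ∈ Set.Ioo (0 : ℝ) π, 0 < infWidthMap θ ∧ infWidthMap θ < θ) ∧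
    infWidthMap 0 = 0 :=
  ⟨fun _ ⟨h0, hπ⟩ => ⟨pi_mul_cos_lt_sin_add_mul_cos h0 hπ, sin_add_mul_cos_lt_pi h0 hπ⟩,
    fun _ ⟨h0, hπ⟩ => ⟨infWidthMap_pos h0 hπ, infWidthMap_lt_self h0 hπ⟩,
    infWidthMap_zero⟩
end

section
/- Let f : [0, π] → [0, π] be defined by f(θ) = arccos((sin θ + (π − θ)·cos θ)/π). Then as θ → 0⁺, f(θ) = θ − θ²/(3π) + O(θ³); that is, there exist constants C > 0 and θ₀ ∈ (0, π) such that |f(θ) − θ + θ²/(3π)| ≤ C·θ³ for all θ ∈ (0, θ₀]. -/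
open Real

private lemma aux_sin_lb {x : ℝ} (hx : 0 < x) (hx1 : x ≤ 1) : 3/4 * x ≤ Real.sin x := by
  have h3 : x ^ 3 ≤ x := by
    nlinarith [mul_nonneg (mul_nonneg hx.le (sub_nonneg.2 hx1)) (show (0:ℝ) ≤ 1 + x by linarith)]
  have := Real.sin_gt_sub_cube hx
  linarith

set_option maxHeartbeats 1000000 in
/-- As `θ → 0⁺`, the infinite width angle update map satisfies
`f(θ) = θ − θ²/(3π) + O(θ³)`: there exist constants `C > 0` and `θ₀ ∈ (0, π)` such that
`|f(θ) − θ + θ²/(3π)| ≤ C·θ³` for all `θ ∈ (0, θ₀]`. -/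
theorem infWidthMap_small_angle_expansion :
    ∃ C > (0 : ℝ), ∃ θ₀ ∈ Set.Ioo (0 : ℝ) π, ∀ θ ∈ Set.Ioc (0 : ℝ) θ₀,
      |infWidthMap θ - θ + θ ^ 2 / (3 * π)| ≤ C * θ ^ 3 := by
  have pi3 : (3 : ℝ) < π := Real.pi_gt_three
  have pi4 : π < 3.15 := by linarith [Real.pi_lt_d2]
  have pipos : (0 : ℝ) < π := by linarith
  refine ⟨8, by norm_num, 1/10, ⟨by norm_num, by linarith⟩, ?_⟩
  rintro θ ⟨hθ0, hθ1⟩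
  obtain ⟨h, hh⟩ : ∃ h : ℝ, h = θ - θ ^ 2 / (3 * π) := ⟨_, rfl⟩
  obtain ⟨g, hg⟩ : ∃ g : ℝ, g = (Real.sin θ + (π - θ) * Real.cos θ) / π := ⟨_, rfl⟩
  have hθsq : θ ^ 2 ≤ θ / 10 := by nlinarith
  have hθ3 : (0:ℝ) < θ ^ 3 := by positivity
  have hθ4 : (0:ℝ) < θ ^ 4 := by positivity
  have hcube : θ ^ 3 ≤ θ / 100 := by nlinarith
  have hhle : h ≤ θ := by
    have : 0 ≤ θ ^ 2 / (3 * π) := by positivity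
    rw [hh]; linarith
  have hhge : θ / 2 ≤ h := by
    have h9 : θ ^ 2 / (3 * π) ≤ θ ^ 2 / 9 := by
      apply div_le_div_of_nonneg_left (by positivity) (by norm_num) (by linarith)
    rw [hh]; nlinarith
  have hh0 : 0 < h := by linarith
  -- Taylor bounds
  have habsθ : |θ| ≤ 1 := by rw [abs_of_pos hθ0]; linarith
  have habsh : |h| ≤ 1 := by rw [abs_of_pos hh0]; linarith
  have e1 := Real.sin_bound habsθ
  have e2 := Real.cos_bound habsθ
  have e3 := Real.cos_bound habsh
  rw [abs_of_pos hθ0] at e1 e2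
  rw [abs_of_pos hh0] at e3
  have hh4 : h ^ 4 ≤ θ ^ 4 := pow_le_pow_left₀ hh0.le hhle 4
  -- Step A : |g − cos h| ≤ θ⁴/2
  have hident : θ - θ^3/6 + (π - θ) * (1 - θ^2/2) - π * (1 - h^2/2) = θ^4/(18*π) := by
    rw [hh]; field_simp; ring
  have hπθ : (0:ℝ) < π - θ := by linarith
  have hπθ4 : 3 * θ^4 ≤ π * θ^4 := by nlinarith
  have hnum : |Real.sin θ + (π - θ) * Real.cos θ - π * Real.cos h| ≤ π * (θ ^ 4 / 2) := by
    have expand : Real.sin θ + (π - θ) * Real.cos θ - π * Real.cos h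
        = (Real.sin θ - (θ - θ^3/6)) + (π - θ) * (Real.cos θ - (1 - θ^2/2))
          - π * (Real.cos h - (1 - h^2/2)) + θ^4/(18*π) := by
      linear_combination hident
    have t2 : |(π - θ) * (Real.cos θ - (1 - θ^2/2))| ≤ π * (θ^4 * (5/96)) := by
      rw [abs_mul, abs_of_pos hπθ]
      exact mul_le_mul (by linarith) e2 (abs_nonneg _) pipos.le
    have t3 : |π * (Real.cos h - (1 - h^2/2))| ≤ π * (θ^4 * (5/96)) := by
      rw [abs_mul, abs_of_pos pipos]
      exact mul_le_mul_of_nonneg_left (e3.trans (by nlinarith)) pipos.le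
    have t4 : |θ^4/(18*π)| ≤ θ^4/54 := by
      rw [abs_of_pos (by positivity)]
      apply div_le_div_of_nonneg_left hθ4.le (by norm_num) (by linarith)
    rw [expand, abs_le]
    constructor <;>
      linarith [neg_abs_le (Real.sin θ - (θ - θ^3/6)), le_abs_self (Real.sin θ - (θ - θ^3/6)),
        neg_abs_le ((π - θ) * (Real.cos θ - (1 - θ^2/2))),
        le_abs_self ((π - θ) * (Real.cos θ - (1 - θ^2/2))),
        neg_abs_le (π * (Real.cos h - (1 - h^2/2))),
        le_abs_self (π * (Real.cos h - (1 - h^2/2))),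
        neg_abs_le (θ^4/(18*π)), le_abs_self (θ^4/(18*π)),
        pow_le_pow_of_le_one hθ0.le (by linarith : θ ≤ 1) (by norm_num : 4 ≤ 5)]
  have hA' : -(θ^4/2) ≤ g - Real.cos h ∧ g - Real.cos h ≤ θ^4/2 := by
    have heq : g - Real.cos h = (Real.sin θ + (π - θ) * Real.cos θ - π * Real.cos h) / π := by
      rw [hg]; field_simp
    have := abs_le.mp hnum
    constructor <;> rw [heq] <;>
      [rw [le_div_iff₀ pipos]; rw [div_le_iff₀ pipos]] <;> linarith [this.1, this.2]
  -- Step B : sin lower bounds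
  have sinlb : ∀ x : ℝ, 0 < x → x ≤ 1 → 3/4 * x ≤ Real.sin x := fun _ => aux_sin_lb
  obtain ⟨a, ha⟩ : ∃ a : ℝ, a = h - 8 * θ ^ 3 := ⟨_, rfl⟩
  obtain ⟨b, hb⟩ : ∃ b : ℝ, b = h + 8 * θ ^ 3 := ⟨_, rfl⟩
  have ha0 : θ / 4 ≤ a := by rw [ha]; nlinarith
  have hb1 : b ≤ θ + θ / 10 := by rw [hb]; nlinarith
  have hm1 : 3/4 * (θ/4) ≤ Real.sin (h - 4 * θ ^ 3) := by
    have h1 : 0 < h - 4 * θ ^ 3 := by nlinarith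
    have := sinlb _ h1 (by nlinarith)
    nlinarith
  have hm2 : 3/4 * (θ/2) ≤ Real.sin (h + 4 * θ ^ 3) := by
    have h1 : 0 < h + 4 * θ ^ 3 := by nlinarith
    have := sinlb _ h1 (by nlinarith)
    nlinarith
  have hs : 3 * θ ^ 3 ≤ Real.sin (4 * θ ^ 3) := by
    have h1 : 0 < 4 * θ ^ 3 := by positivity
    have := sinlb _ h1 (by nlinarith)
    nlinarith
  have hcosa : Real.cos a - Real.cos h = 2 * Real.sin (h - 4 * θ ^ 3) * Real.sin (4 * θ ^ 3) := by
    rw [Real.cos_sub_cos, show (a + h) / 2 = h - 4 * θ ^ 3 by rw [ha]; ring,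
      show (a - h) / 2 = -(4 * θ ^ 3) by rw [ha]; ring, Real.sin_neg]
    ring
  have hcosb : Real.cos h - Real.cos b = 2 * Real.sin (h + 4 * θ ^ 3) * Real.sin (4 * θ ^ 3) := by
    rw [Real.cos_sub_cos, show (h + b) / 2 = h + 4 * θ ^ 3 by rw [hb]; ring,
      show (h - b) / 2 = -(4 * θ ^ 3) by rw [hb]; ring, Real.sin_neg]
    ring
  have hga : g ≤ Real.cos a := by
    have hprod : (3/4 * (θ/4)) * (3 * θ^3) ≤ Real.sin (h - 4 * θ ^ 3) * Real.sin (4 * θ ^ 3) :=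
      mul_le_mul hm1 hs (by positivity) (le_trans (by positivity) hm1)
    linarith [hA'.2, hcosa, hprod]
  have hgb : Real.cos b ≤ g := by
    have hprod : (3/4 * (θ/2)) * (3 * θ^3) ≤ Real.sin (h + 4 * θ ^ 3) * Real.sin (4 * θ ^ 3) :=
      mul_le_mul hm2 hs (by positivity) (le_trans (by positivity) hm2)
    linarith [hA'.1, hcosb, hprod]
  -- arccos step
  have haIcc : (0:ℝ) ≤ a := by linarith
  have haπ : a ≤ π := by rw [ha]; linarith [hθ3]
  have hb0 : (0:ℝ) ≤ b := by rw [hb]; linarith [hθ3]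
  have hbπ : b ≤ π := by linarith
  have hgmem : g ∈ Set.Icc (-1:ℝ) 1 :=
    ⟨le_trans (Real.neg_one_le_cos b) hgb, le_trans hga (Real.cos_le_one a)⟩
  have hcamem : Real.cos a ∈ Set.Icc (-1:ℝ) 1 := ⟨Real.neg_one_le_cos a, Real.cos_le_one a⟩
  have hcbmem : Real.cos b ∈ Set.Icc (-1:ℝ) 1 := ⟨Real.neg_one_le_cos b, Real.cos_le_one b⟩
  have hle1 : a ≤ Real.arccos g := by
    have := Real.strictAntiOn_arccos.antitoneOn hgmem hcamem hga
    rwa [Real.arccos_cos haIcc haπ] at this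
  have hle2 : Real.arccos g ≤ b := by
    have := Real.strictAntiOn_arccos.antitoneOn hcbmem hgmem hgb
    rwa [Real.arccos_cos hb0 hbπ] at this
  have hf : infWidthMap θ = Real.arccos g := by rw [infWidthMap, hg]
  have heq2 : infWidthMap θ - θ + θ ^ 2 / (3 * π) = Real.arccos g - h := by
    rw [hf, hh]; ring
  rw [heq2, abs_le]
  constructor
  · rw [ha] at hle1; linarith
  · rw [hb] at hle2; linarith
end

section
/- Let f : [0, π] → [0, π] be defined by f(θ) = arccos((sin θ + (π − θ)·cos θ)/π). Then as θ → 0⁺, ln sin²(f(θ)) = ln sin²(θ) − (2/(3π))·θ − (2/(9π²))·θ² + O(θ³); that is, there exist constants C > 0 and θ₀ ∈ (0, π) such that |ln sin²(f(θ)) − ln sin²(θ) + (2/(3π))θ + (2/(9π²))θ²| ≤ C·θ³ for all θ ∈ (0, θ₀]. -/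
open Real

/-! With `u = sin θ - θ cos θ`, the argument of `arccos` is `cos θ + u / π`, so
`sin² f(θ) = sin² θ (1 - 2θ/(3π)) + (2/π) (θ sin² θ / 3 - u cos θ) - (u/π)²`.
Both correction terms are `O(θ⁵)`: `u' = θ sin θ` gives `0 ≤ u ≤ θ³/3`, and
`(θ sin² θ / 3 - u cos θ)' = (4/3) u sin θ ≤ 4θ⁴/9`. Dividing by `sin² θ ≥ θ²/4` gives
`sin² f(θ) / sin² θ = 1 - 2θ/(3π) + O(θ³)`, and the second order expansion of `log (1 + x)`
yields the claim, the quadratic coefficient being `(2/(3π))² / 2 = 2/(9π²)`. -/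

open Set

lemma le_of_hasDerivAt_le_of_le {f g f' g' : ℝ → ℝ} {a b : ℝ}
    (hf : ∀ x, HasDerivAt f (f' x) x) (hg : ∀ x, HasDerivAt g (g' x) x) (ha : f a ≤ g a)
    (hderiv : ∀ x ∈ Ico a b, f' x ≤ g' x) : ∀ x ∈ Icc a b, f x ≤ g x :=
  fun _ hx => image_le_of_deriv_right_le_deriv_boundary
    (fun x _ => (hf x).continuousAt.continuousWithinAt) (fun x _ => (hf x).hasDerivWithinAt) ha
    (fun x _ => (hg x).continuousAt.continuousWithinAt) (fun x _ => (hg x).hasDerivWithinAt)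
    hderiv hx

noncomputable def sinSubMulCos (θ : ℝ) : ℝ := sin θ - θ * cos θ

lemma hasDerivAt_sinSubMulCos (θ : ℝ) : HasDerivAt sinSubMulCos (θ * sin θ) θ :=
  ((hasDerivAt_sin θ).sub ((hasDerivAt_id θ).mul (hasDerivAt_cos θ))).congr_deriv (by
    simp only [id]; ring)

lemma sinSubMulCos_nonneg {θ : ℝ} (h0 : 0 ≤ θ) (hπ : θ ≤ π) : 0 ≤ sinSubMulCos θ :=
  le_of_hasDerivAt_le_of_le (fun _ => hasDerivAt_const _ 0) hasDerivAt_sinSubMulCos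
    (by simp [sinSubMulCos])
    (fun t ht => mul_nonneg ht.1 (sin_nonneg_of_nonneg_of_le_pi ht.1 ht.2.le)) θ ⟨h0, hπ⟩

lemma sinSubMulCos_le {θ : ℝ} (h0 : 0 ≤ θ) : sinSubMulCos θ ≤ θ ^ 3 / 3 :=
  le_of_hasDerivAt_le_of_le hasDerivAt_sinSubMulCos
    (g' := fun t => t ^ 2) (fun t => ((hasDerivAt_pow 3 t).div_const 3).congr_deriv (by ring))
    (by simp [sinSubMulCos])
    (fun t ht => by nlinarith [sin_le ht.1, ht.1]) θ ⟨h0, le_rfl⟩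

lemma hasDerivAt_mul_sin_sq_div_three_sub_cos_mul_sinSubMulCos (θ : ℝ) :
    HasDerivAt (fun t => t * sin t ^ 2 / 3 - cos t * sinSubMulCos t)
      (4 / 3 * sin θ * sinSubMulCos θ) θ :=
  ((((hasDerivAt_id θ).mul ((hasDerivAt_sin θ).pow 2)).div_const 3).sub
    ((hasDerivAt_cos θ).mul (hasDerivAt_sinSubMulCos θ))).congr_deriv (by
      simp only [id, Pi.pow_apply, sinSubMulCos]; ring)

lemma mul_sin_sq_div_three_sub_cos_mul_sinSubMulCos_mem_Icc {θ : ℝ} (h0 : 0 ≤ θ) (hπ : θ ≤ π) :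
    θ * sin θ ^ 2 / 3 - cos θ * sinSubMulCos θ ∈ Icc 0 (4 * θ ^ 5 / 45) := by
  have hu : ∀ t ∈ Ico 0 θ, 0 ≤ sinSubMulCos t ∧ sinSubMulCos t ≤ t ^ 3 / 3 := fun t ht =>
    ⟨sinSubMulCos_nonneg ht.1 (ht.2.le.trans hπ), sinSubMulCos_le ht.1⟩
  have hs : ∀ t ∈ Ico 0 θ, 0 ≤ sin t ∧ sin t ≤ t := fun t ht =>
    ⟨sin_nonneg_of_nonneg_of_le_pi ht.1 (ht.2.le.trans hπ), sin_le ht.1⟩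
  constructor
  · exact le_of_hasDerivAt_le_of_le (fun _ => hasDerivAt_const _ 0)
      hasDerivAt_mul_sin_sq_div_three_sub_cos_mul_sinSubMulCos (by simp [sinSubMulCos])
      (fun t ht => by nlinarith [mul_nonneg (hs t ht).1 (hu t ht).1]) θ ⟨h0, le_rfl⟩
  · refine le_of_hasDerivAt_le_of_le hasDerivAt_mul_sin_sq_div_three_sub_cos_mul_sinSubMulCos
      (g' := fun t => 4 * t ^ 4 / 9)
      (fun t => ((hasDerivAt_pow 5 t).const_mul 4 |>.div_const 45).congr_deriv (by ring))
      (by simp [sinSubMulCos]) (fun t ht => ?_) θ ⟨h0, le_rfl⟩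
    have := mul_le_mul (hs t ht).2 (hu t ht).2 (hu t ht).1 ht.1
    linarith

lemma cos_infWidthMap {θ : ℝ} (h0 : 0 ≤ θ) (hπ : θ ≤ π) :
    cos (infWidthMap θ) = cos θ + sinSubMulCos θ / π := by
  have hpi := pi_pos
  have hs := sin_nonneg_of_nonneg_of_le_pi h0 hπ
  have hc := mul_le_mul_of_nonneg_left (abs_le.1 (abs_cos_le_one θ)).2 (sub_nonneg.2 hπ)
  have hc' := mul_le_mul_of_nonneg_left (abs_le.1 (abs_cos_le_one θ)).1 (sub_nonneg.2 hπ)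
  rw [infWidthMap, cos_arccos (by rw [le_div_iff₀ hpi]; nlinarith)
    (by rw [div_le_one hpi]; nlinarith [sin_le h0])]
  field_simp
  simp only [sinSubMulCos]
  ring

lemma sin_sq_infWidthMap {θ : ℝ} (h0 : 0 ≤ θ) (hπ : θ ≤ π) :
    sin (infWidthMap θ) ^ 2 = sin θ ^ 2 * (1 - 2 / (3 * π) * θ) +
      2 / π * (θ * sin θ ^ 2 / 3 - cos θ * sinSubMulCos θ) - (sinSubMulCos θ / π) ^ 2 := by
  have hpi := pi_pos.ne'
  rw [sin_sq, cos_infWidthMap h0 hπ]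
  field_simp
  linear_combination (-(π ^ 2 * 3)) * sin_sq_add_cos_sq θ

lemma abs_sin_sq_infWidthMap_sub_le {θ : ℝ} (h0 : 0 ≤ θ) (hπ : θ ≤ π) :
    |sin (infWidthMap θ) ^ 2 - sin θ ^ 2 * (1 - 2 / (3 * π) * θ)| ≤ θ ^ 5 / 16 := by
  obtain ⟨hw0, hw⟩ := mul_sin_sq_div_three_sub_cos_mul_sinSubMulCos_mem_Icc h0 hπ
  have h3 := pi_gt_three
  have hθ5 := pow_nonneg h0 5
  have hu0 : 0 ≤ sinSubMulCos θ / π := div_nonneg (sinSubMulCos_nonneg h0 hπ) pi_pos.le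
  have hu : sinSubMulCos θ / π ≤ θ ^ 3 / 9 := by
    rw [div_le_iff₀ pi_pos]
    nlinarith [sinSubMulCos_le h0, pow_nonneg h0 3]
  have hw' : 2 / π * (θ * sin θ ^ 2 / 3 - cos θ * sinSubMulCos θ) ≤ θ ^ 5 / 16 := by
    rw [div_mul_eq_mul_div, div_le_iff₀ pi_pos]
    nlinarith
  have hu' : (sinSubMulCos θ / π) ^ 2 ≤ θ ^ 5 / 16 := by
    have : θ ^ 6 ≤ 4 * θ ^ 5 := by nlinarith [pi_le_four]
    nlinarith [pow_le_pow_left₀ hu0 hu 2]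
  have hw0' : 0 ≤ 2 / π * (θ * sin θ ^ 2 / 3 - cos θ * sinSubMulCos θ) :=
    mul_nonneg (by positivity) hw0
  rw [sin_sq_infWidthMap h0 hπ, abs_le]
  constructor <;> linarith [sq_nonneg (sinSubMulCos θ / π)]

lemma abs_sin_sq_infWidthMap_div_sub_le {θ : ℝ} (h0 : 0 < θ) (hθ : θ ≤ π / 2) :
    |sin (infWidthMap θ) ^ 2 / sin θ ^ 2 - (1 - 2 / (3 * π) * θ)| ≤ θ ^ 3 / 4 := by
  have hs : θ / 2 ≤ sin θ := by
    have := mul_le_sin h0.le hθ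
    have : 1 / 2 ≤ 2 / π := by rw [div_le_div_iff₀ two_pos pi_pos]; linarith [pi_le_four]
    nlinarith
  have hs2 : 0 < sin θ ^ 2 := by nlinarith
  rw [div_sub' hs2.ne', abs_div, abs_of_pos hs2, div_le_iff₀ hs2]
  calc _ ≤ θ ^ 5 / 16 := abs_sin_sq_infWidthMap_sub_le h0.le (by linarith [pi_pos])
    _ ≤ θ ^ 3 / 4 * sin θ ^ 2 := by nlinarith [pow_pos h0 3, pow_le_pow_left₀ (by positivity) hs 2]

lemma abs_log_one_add_sub_le {y : ℝ} (hy : |y| ≤ 1 / 2) :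
    |log (1 + y) - (y - y ^ 2 / 2)| ≤ 2 * |y| ^ 3 := by
  have h := abs_log_sub_add_sum_range_le (x := -y) (by rw [abs_neg]; linarith) 2
  norm_num [Finset.sum_range_succ] at h
  calc _ = |-y + y ^ 2 / 2 + log (1 + y)| := by congr 1; ring
    _ ≤ |y| ^ 3 / (1 - |y|) := h
    _ ≤ 2 * |y| ^ 3 := by
        rw [div_le_iff₀ (by linarith)]; nlinarith [pow_nonneg (abs_nonneg y) 3]

lemma abs_log_one_add_sub_le_of_abs_sub_le {y z : ℝ} (hy : |y| ≤ 1 / 2) (hz : |z| ≤ 1 / 2) :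
    |log (1 + y) - (z - z ^ 2 / 2)| ≤ 2 * |y| ^ 3 + 3 / 2 * |y - z| := by
  have hyz : |1 - (y + z) / 2| ≤ 3 / 2 := by
    rw [abs_le] at *; constructor <;> linarith
  calc _ = |(log (1 + y) - (y - y ^ 2 / 2)) + (y - z) * (1 - (y + z) / 2)| := by congr 1; ring
    _ ≤ |log (1 + y) - (y - y ^ 2 / 2)| + |y - z| * |1 - (y + z) / 2| := by
        rw [← abs_mul]; exact abs_add_le _ _
    _ ≤ 2 * |y| ^ 3 + 3 / 2 * |y - z| := by
        nlinarith [abs_log_one_add_sub_le hy, abs_nonneg (y - z)]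

/-- As `θ → 0⁺`, the infinite width angle update map satisfies
`ln sin²(f(θ)) = ln sin²(θ) − (2/(3π))·θ − (2/(9π²))·θ² + O(θ³)`: there exist constants
`C > 0` and `θ₀ ∈ (0, π)` such that
`|ln sin²(f(θ)) − ln sin²(θ) + (2/(3π))θ + (2/(9π²))θ²| ≤ C·θ³` for all `θ ∈ (0, θ₀]`. -/
theorem infWidthMap_log_sin_sq_expansion :
    ∃ C > (0 : ℝ), ∃ θ₀ ∈ Set.Ioo (0 : ℝ) π, ∀ θ ∈ Set.Ioc (0 : ℝ) θ₀,
      |Real.log (Real.sin (infWidthMap θ) ^ 2) - Real.log (Real.sin θ ^ 2) +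
          (2 / (3 * π)) * θ + (2 / (9 * π ^ 2)) * θ ^ 2| ≤ C * θ ^ 3 := by
  have hπ := pi_gt_three
  refine ⟨1, one_pos, 1, ⟨one_pos, by linarith⟩, ?_⟩
  rintro θ ⟨hθ0, hθ1⟩
  set r := sin (infWidthMap θ) ^ 2 / sin θ ^ 2
  set z := -(2 / (3 * π) * θ)
  have hrz : |(r - 1) - z| ≤ θ ^ 3 / 4 := by
    simpa only [z, sub_neg_eq_add, sub_sub, sub_add] using
      abs_sin_sq_infWidthMap_div_sub_le hθ0 (by linarith)
  have hz : |z| ≤ θ / 4 := by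
    rw [abs_neg, abs_of_nonneg (by positivity), div_mul_eq_mul_div, div_le_div_iff₀ (by positivity)
      four_pos]
    nlinarith
  have hr : |r - 1| ≤ θ / 2 := by
    have := abs_sub_abs_le_abs_sub (r - 1) z
    nlinarith [pow_le_one₀ hθ0.le hθ1 (n := 2)]
  have hlog : log (sin (infWidthMap θ) ^ 2) - log (sin θ ^ 2) = log (1 + (r - 1)) := by
    have hr0 : r ≠ 0 := by linarith [abs_le.1 hr]
    rw [add_sub_cancel, log_div (div_ne_zero_iff.1 hr0).1 (div_ne_zero_iff.1 hr0).2]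
  calc _ = |log (1 + (r - 1)) - (z - z ^ 2 / 2)| := by rw [← hlog]; congr 1; ring
    _ ≤ 2 * |r - 1| ^ 3 + 3 / 2 * |(r - 1) - z| :=
        abs_log_one_add_sub_le_of_abs_sub_le (by linarith) (by linarith)
    _ ≤ 1 * θ ^ 3 := by
        have := pow_le_pow_left₀ (abs_nonneg _) hr 3
        linarith [pow_pos hθ0 3, div_pow θ 2 3]
end
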